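/- Let h : M → L be a frame homomorphism. If for all a ∈ M and b ∈ L, h(a) ∧ b* = 0 implies there exists d ∈ L with a ∧ d* = 0 and b* ≤ h(d*), then h is nearly open (h(a*) = h(a)* for all a ∈ M). -/

import Mathlib

theorem map_compl_le_compl_map {F α β : Type*} [HeytingAlgebra α] [HeytingAlgebra β]
    [FunLike F α β] [InfHomClass F α β] [BotHomClass F α β] (f : F) (a : α) :
    f aᶜ ≤ (f a)ᶜ := by
  rw [le_compl_iff_disjoint_left, disjoint_iff, ← map_inf, inf_compl_self, map_bot]

/-- If a frame homomorphism `h : M → L` satisfies: whenever `h a ⊓ bᶜ = ⊥` there exists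
`d` with `a ⊓ dᶜ = ⊥` and `bᶜ ≤ h (dᶜ)`, then `h` is nearly open. -/
theorem nearly_open_of_SoTro {L M : Type*} [Order.Frame L] [Order.Frame M]
    (h : FrameHom M L)
    (hyp : ∀ (a : M) (b : L), h a ⊓ bᶜ = ⊥ → ∃ d : M, a ⊓ dᶜ = ⊥ ∧ bᶜ ≤ h (dᶜ)) :
    ∀ a : M, h (aᶜ) = (h a)ᶜ := by
  intro a
  refine (map_compl_le_compl_map h a).antisymm ?_
  obtain ⟨d, had, hd⟩ := hyp a (h a) (inf_compl_self _)
  have hda : dᶜ ≤ aᶜ := le_compl_iff_disjoint_left.mpr (disjoint_iff.mpr had)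
  exact hd.trans (OrderHomClass.mono h hda)
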